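/- Let a group G act by isometries on a δ-hyperbolic geodesic space S with δ > 0. Then the action is acylindrical if and only if there exist R_0, N_0 > 0 such that for all x,y ∈ S with d(x,y) ≥ R_0, the set {g ∈ G : d(x,gx) ≤ 100δ and d(y,gy) ≤ 100δ} contains at most N_0 elements. Moreover, in the converse direction one can take R_d = R_0 + 4d + 100δ and N_d = N_0·⌈(2d+20δ)/(10δ)⌉. -/
import Mathlib


set_option autoImplicit false
set_option maxHeartbeats 1000000
set_option linter.unusedVariables false

noncomputable section

universe u v
/-! ## Geodesics, hyperbolic spaces, isometric actions and rotating families -/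

namespace GMet

open Set

/-- `f` parametrizes a geodesic segment from `x` to `y` by arclength on `[0, dist x y]`. -/
def IsGeodesicFrom {S : Type v} [MetricSpace S] (f : ℝ → S) (x y : S) : Prop :=
  f 0 = x ∧ f (dist x y) = y ∧
    ∀ s ∈ Icc (0 : ℝ) (dist x y), ∀ t ∈ Icc (0 : ℝ) (dist x y), dist (f s) (f t) = |s - t|

/-- A geodesic metric space: any two points are joined by a geodesic. -/
def GeodesicSpace (S : Type v) [MetricSpace S] : Prop :=
  ∀ x y : S, ∃ f : ℝ → S, IsGeodesicFrom f x y

/-- `p` lies on the geodesic `f` from `x` to `y`. -/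
def OnGeodesic {S : Type v} [MetricSpace S] (f : ℝ → S) (x y : S) (p : S) : Prop :=
  ∃ t ∈ Icc (0 : ℝ) (dist x y), f t = p

/-- `S` is `δ`-hyperbolic: every geodesic triangle is `δ`-thin, i.e. each side is contained in
the closed `δ`-neighbourhood of the union of the other two sides. -/
def DeltaHyp (S : Type v) [MetricSpace S] (δ : ℝ) : Prop :=
  ∀ (x y z : S) (f g h : ℝ → S),
    IsGeodesicFrom f x y → IsGeodesicFrom g y z → IsGeodesicFrom h x z →
    ∀ s ∈ Icc (0 : ℝ) (dist x y),
      ∃ p : S, (OnGeodesic g y z p ∨ OnGeodesic h x z p) ∧ dist (f s) p ≤ δ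

/-- The action of `G` on `S` is by isometries. -/
def IsIsometricAction (G : Type u) (S : Type v) [Group G] [MetricSpace S]
    [MulAction G S] : Prop :=
  ∀ (g : G) (x y : S), dist (g • x) (g • y) = dist x y

/-- `g` is loxodromic: some (equivalently, any) orbit map `ℤ → S`, `n ↦ gⁿ • x`, is a
quasi-isometric embedding. -/
def IsLoxodromic (G : Type u) (S : Type v) [Group G] [MetricSpace S] [MulAction G S]
    (g : G) : Prop :=
  ∃ (x : S) (lam c : ℝ), 1 ≤ lam ∧ 0 ≤ c ∧
    ∀ m n : ℤ, (|(m : ℝ) - (n : ℝ)| - c) / lam ≤ dist (g ^ m • x) (g ^ n • x) ∧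
      dist (g ^ m • x) (g ^ n • x) ≤ lam * |(m : ℝ) - (n : ℝ)| + c

/-- `h` satisfies the weak proper discontinuity (WPD) condition. -/
def IsWPD {G : Type u} {S : Type v} [Group G] [MetricSpace S] [MulAction G S] (h : G) : Prop :=
  ∀ ε : ℝ, 0 < ε → ∀ x : S, ∃ N : ℕ,
    {g : G | dist x (g • x) < ε ∧ dist ((h ^ N) • x) (g • ((h ^ N) • x)) < ε}.Finite

/-- `(C, {G_c}_{c∈C})` is a rotating family: `C` is `G`-invariant, `G_c` fixes `c`, and
`G_{g•c} = g G_c g⁻¹`. -/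
def IsRotatingFamily (G : Type u) (S : Type v) [Group G] [MetricSpace S] [MulAction G S]
    (C : Set S) (Gc : S → Subgroup G) : Prop :=
  (∀ g : G, ∀ c ∈ C, g • c ∈ C) ∧
  (∀ c ∈ C, ∀ g ∈ Gc c, g • c = c) ∧
  (∀ g : G, ∀ c ∈ C, Gc (g • c) = (Gc c).map (MulAut.conj g).toMonoidHom)

/-- `C` is `ρ`-separated: distinct points of `C` are at distance at least `ρ`. -/
def IsSeparated {S : Type v} [MetricSpace S] (C : Set S) (ρ : ℝ) : Prop :=
  ∀ c ∈ C, ∀ c' ∈ C, c ≠ c' → ρ ≤ dist c c'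

/-- The rotating family is very rotating: for all `c ∈ C`, `g ∈ G_c ∖ {1}` and `x, y` with
`20δ ≤ d(x,c) ≤ 30δ` and `d(gx, y) ≤ 15δ`, every geodesic from `x` to `y` contains `c`. -/
def IsVeryRotating (G : Type u) (S : Type v) [Group G] [MetricSpace S] [MulAction G S]
    (C : Set S) (Gc : S → Subgroup G) (δ : ℝ) : Prop :=
  ∀ c ∈ C, ∀ g ∈ Gc c, g ≠ 1 → ∀ x y : S,
    20 * δ ≤ dist x c → dist x c ≤ 30 * δ → dist (g • x) y ≤ 15 * δ →
    ∀ f : ℝ → S, IsGeodesicFrom f x y → OnGeodesic f x y c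

/-- The subgroup `Rot = ⟨G_c : c ∈ C⟩` generated by a rotating family. -/
def rotSub {G : Type u} {S : Type v} [Group G] (C : Set S) (Gc : S → Subgroup G) :
    Subgroup G :=
  ⨆ c ∈ C, Gc c

/-- `N` is the (internal) free product of the family of subgroups `K i`: the canonical
homomorphism `∗_i K_i → G` is injective with image `N`. -/
def IsFreeProductOf {G : Type u} [Group G] {ι : Type v} (K : ι → Subgroup G)
    (N : Subgroup G) : Prop :=
  Function.Injective (Monoid.CoprodI.lift fun i : ι => (K i).subtype) ∧
    MonoidHom.range (Monoid.CoprodI.lift fun i : ι => (K i).subtype) = N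

/-- The quotient (pseudo-)metric on `S/N`: `d̄(x̄, ȳ) = inf_{g ∈ N} d(x, g•y)`. -/
def qdist {G : Type u} {S : Type v} [Group G] [MetricSpace S] [MulAction G S]
    (N : Subgroup G) (x y : S) : ℝ :=
  ⨅ g : N, dist x ((g : G) • y)

/-- The Gromov product `(x|y)_w` with respect to the distance function `d`. -/
def gromovProd {α : Type v} (d : α → α → ℝ) (x y w : α) : ℝ := (d w x + d w y - d x y) / 2

/-- Gromov hyperbolicity of a distance function, via the four-point condition. -/
def FourPointHyp {α : Type v} (d : α → α → ℝ) (δ : ℝ) : Prop :=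
  ∀ w x y z : α, min (gromovProd d x y w) (gromovProd d y z w) - δ ≤ gromovProd d x z w

/-- The Cartan–Hadamard constant `R_CH(δ) = 10^5 δ`. -/
def RCH (d : ℝ) : ℝ := 10 ^ 5 * d

/-- `A` contains at most `N` elements. -/
def AtMostCard {α : Type v} (A : Set α) (N : ℕ) : Prop := A.Finite ∧ A.ncard ≤ N

/-- The action of `G` on `S` is acylindrical. -/
def IsAcylindrical (G : Type u) (S : Type v) [Group G] [MetricSpace S] [MulAction G S] : Prop :=
  ∀ d : ℝ, 0 < d → ∃ (R : ℝ) (N : ℕ), 0 < R ∧ 0 < N ∧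
    ∀ x y : S, R ≤ dist x y →
      AtMostCard {g : G | dist x (g • x) ≤ d ∧ dist y (g • y) ≤ d} N

/-- `g` acts elliptically for the distance function `d`: orbits are bounded. -/
def EllipticFor {G : Type u} {S : Type v} [Group G] [MulAction G S]
    (d : S → S → ℝ) (g : G) : Prop :=
  ∀ x : S, ∃ M : ℝ, ∀ n : ℤ, d x (g ^ n • x) ≤ M

/-- `g` acts loxodromically for the distance function `d`: an orbit map of `ℤ` is a
quasi-isometric embedding. -/
def LoxodromicFor {G : Type u} {S : Type v} [Group G] [MulAction G S]
    (d : S → S → ℝ) (g : G) : Prop :=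
  ∃ (x : S) (lam c : ℝ), 1 ≤ lam ∧ 0 ≤ c ∧
    ∀ m n : ℤ, (|(m : ℝ) - (n : ℝ)| - c) / lam ≤ d (g ^ m • x) (g ^ n • x) ∧
      d (g ^ m • x) (g ^ n • x) ≤ lam * |(m : ℝ) - (n : ℝ)| + c

/-- `g` acts parabolically for the distance function `d`: neither elliptic nor loxodromic. -/
def ParabolicFor {G : Type u} {S : Type v} [Group G] [MulAction G S]
    (d : S → S → ℝ) (g : G) : Prop :=
  ¬ EllipticFor d g ∧ ¬ LoxodromicFor d g

/-- `K` is virtually cyclic (elementary): it contains a cyclic subgroup of finite index. -/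
def IsVirtuallyCyclic {G : Type u} [Group G] (K : Subgroup G) : Prop :=
  ∃ C : Subgroup G, C ≤ K ∧ (∃ c : G, ∀ x ∈ C, ∃ n : ℤ, x = c ^ n) ∧
    (C.subgroupOf K).index ≠ 0

/-- The Hausdorff distance between `A` and `B` is finite. -/
def HausdorffClose {S : Type v} [MetricSpace S] (A B : Set S) : Prop :=
  ∃ K : ℝ, (∀ a ∈ A, ∃ b ∈ B, dist a b ≤ K) ∧ (∀ b ∈ B, ∃ a ∈ A, dist a b ≤ K)

end GMet

open GMet Set in
/-- Distance from the start point along a geodesic. -/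
lemma GMet.geo_dist {S : Type v} [MetricSpace S] {f : ℝ → S} {x y : S}
    (hf : IsGeodesicFrom f x y) {t : ℝ} (ht : t ∈ Icc (0:ℝ) (dist x y)) :
    dist x (f t) = t := by
  have h := hf.2.2 0 ⟨le_rfl, dist_nonneg⟩ t ht
  rw [hf.1, zero_sub, abs_neg, abs_of_nonneg ht.1] at h
  exact h

open GMet Set in
/-- The reversed, translated geodesic from `g • y` to `g • x`. -/
lemma GMet.rev_geo {G : Type u} [Group G] {S : Type v} [MetricSpace S] [MulAction G S]
    (hiso : IsIsometricAction G S) {f : ℝ → S} {x y : S}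
    (hf : IsGeodesicFrom f x y) (g : G) :
    IsGeodesicFrom (fun s => g • f (dist x y - s)) (g • y) (g • x) := by
  have hd : dist (g • y) (g • x) = dist x y := by rw [hiso, dist_comm]
  refine ⟨?_, ?_, ?_⟩
  · simp only [sub_zero, hf.2.1]
  · rw [hd]; simp only [sub_self, hf.1]
  · intro s hs t ht
    rw [hd] at hs ht
    have h1 : dist x y - s ∈ Icc (0:ℝ) (dist x y) := ⟨by linarith [hs.2], by linarith [hs.1]⟩
    have h2 : dist x y - t ∈ Icc (0:ℝ) (dist x y) := ⟨by linarith [ht.2], by linarith [ht.1]⟩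
    show dist (g • f (dist x y - s)) (g • f (dist x y - t)) = |s - t|
    rw [hiso, hf.2.2 _ h1 _ h2]
    have e : dist x y - s - (dist x y - t) = t - s := by ring
    rw [e, abs_sub_comm]

open GMet Set in
/-- Key geometric lemma: if `g` moves `x` and `y` by at most `d`, then any point of a
geodesic `[x,y]` far enough from both endpoints is `2δ`-close to the translated geodesic. -/
lemma GMet.keyLem {G : Type u} [Group G] {S : Type v} [MetricSpace S] [MulAction G S]
    (hiso : IsIsometricAction G S) {δ : ℝ} (hδ : 0 < δ)
    (hgeo : GeodesicSpace S) (hhyp : DeltaHyp S δ)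
    {f : ℝ → S} {x y : S} (hf : IsGeodesicFrom f x y)
    {g : G} {d : ℝ} (hgx : dist x (g • x) ≤ d) (hgy : dist y (g • y) ≤ d)
    {t : ℝ} (ht0 : d + 2 * δ < t) (ht1 : t + d + δ < dist x y) :
    ∃ s ∈ Icc (0:ℝ) (dist x y), dist (f t) (g • f s) ≤ 2 * δ ∧ |s - t| ≤ d + 2 * δ := by
  have hd0 : 0 ≤ d := le_trans dist_nonneg hgx
  set L := dist x y with hL
  have htI : t ∈ Icc (0:ℝ) L := ⟨by linarith, by linarith⟩
  obtain ⟨g1, hg1⟩ := hgeo y (g • y)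
  obtain ⟨h1, hh1⟩ := hgeo x (g • y)
  obtain ⟨p, hpq, hp⟩ := hhyp x y (g • y) f g1 h1 hf hg1 hh1 t htI
  have hxt : dist x (f t) = t := geo_dist hf htI
  -- p cannot lie on the side [y, g•y]
  have hpcase : OnGeodesic h1 x (g • y) p := by
    rcases hpq with hpg | hph
    · exfalso
      obtain ⟨u, hu, hup⟩ := hpg
      have hyp : dist y p = u := by
        rw [← hup]; exact geo_dist hg1 hu
      have hfy : dist (f t) y = L - t := by
        have h := hf.2.2 t htI L ⟨dist_nonneg, le_rfl⟩
        rw [hf.2.1] at h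
        rw [h, abs_of_nonpos (by linarith [htI.2] : t - L ≤ 0)]; ring
      have : dist (f t) y ≤ dist (f t) p + dist p y := dist_triangle _ _ _
      rw [hfy, dist_comm p y, hyp] at this
      have hud : u ≤ d := le_trans hu.2 hgy
      linarith
    · exact hph
  obtain ⟨u, hu, hup⟩ := hpcase
  -- second triangle: x, g•y, g•x
  obtain ⟨h2, hh2⟩ := hgeo x (g • x)
  have hrev := rev_geo hiso hf g
  obtain ⟨q, hqq, hq⟩ := hhyp x (g • y) (g • x) h1 _ h2 hh1 hrev hh2 u hu
  rw [hup] at hq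
  have hqcase : OnGeodesic (fun s => g • f (L - s)) (g • y) (g • x) q := by
    rcases hqq with hqg | hqh
    · exact hqg
    · exfalso
      obtain ⟨v, hv, hvq⟩ := hqh
      have hxq : dist x q = v := by rw [← hvq]; exact geo_dist hh2 hv
      have hvd : v ≤ d := le_trans hv.2 hgx
      have : dist x (f t) ≤ dist x q + dist q p + dist p (f t) := by
        calc dist x (f t) ≤ dist x q + dist q (f t) := dist_triangle _ _ _
        _ ≤ dist x q + (dist q p + dist p (f t)) := by
              linarith [dist_triangle q p (f t)]
        _ = _ := by ring
      rw [hxt, hxq, dist_comm q p, dist_comm p (f t)] at this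
      linarith
  obtain ⟨v, hv, hvq⟩ := hqcase
  have hgyx : dist (g • y) (g • x) = L := by rw [hiso, dist_comm]
  rw [hgyx] at hv
  have hvq' : g • f (L - v) = q := hvq
  refine ⟨L - v, ⟨by linarith [hv.2], by linarith [hv.1]⟩, ?_, ?_⟩
  · have h3 : dist (f t) (g • f (L - v)) ≤ dist (f t) p + dist p (g • f (L - v)) :=
      dist_triangle _ _ _
    rw [hvq'] at h3 ⊢
    linarith
  · -- |s - t| ≤ d + 2δ where s = L - v
    have hsI : L - v ∈ Icc (0:ℝ) L := ⟨by linarith [hv.2], by linarith [hv.1]⟩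
    have hgxq : dist (g • x) q = L - v := by
      rw [← hvq', hiso]
      exact geo_dist hf hsI
    have e1 : |dist x q - t| ≤ 2 * δ := by
      rw [← hxt]
      have := abs_dist_sub_le q (f t) x
      rw [dist_comm q x, dist_comm (f t) x] at this
      have h2δ : dist q (f t) ≤ 2 * δ := by
        rw [dist_comm]
        calc dist (f t) q ≤ dist (f t) p + dist p q := dist_triangle _ _ _
        _ ≤ 2 * δ := by linarith
      exact le_trans this h2δ
    have e2 : |dist x q - (L - v)| ≤ d := by
      rw [← hgxq]
      have := abs_dist_sub_le x (g • x) q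
      exact le_trans this hgx
    calc |L - v - t| ≤ |L - v - dist x q| + |dist x q - t| := abs_sub_le _ _ _
    _ ≤ d + 2 * δ := by rw [abs_sub_comm]; linarith

open GMet Set in
lemma GMet.mainCount {G : Type u} [Group G] {S : Type v} [MetricSpace S] [MulAction G S]
    (hiso : IsIsometricAction G S) {δ : ℝ} (hδ : 0 < δ)
    (hgeo : GeodesicSpace S) (hhyp : DeltaHyp S δ)
    (R₀ : ℝ) (N₀ : ℕ) (hR₀ : 0 < R₀) (hN₀ : 0 < N₀)
    (H : ∀ x y : S, R₀ ≤ dist x y →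
        AtMostCard {g : G | dist x (g • x) ≤ 100 * δ ∧ dist y (g • y) ≤ 100 * δ} N₀)
    (d : ℝ) (hd : 0 < d) (x y : S) (hxy : R₀ + 4 * d + 100 * δ ≤ dist x y) :
    AtMostCard {g : G | dist x (g • x) ≤ d ∧ dist y (g • y) ≤ d}
      (N₀ * ⌈(2 * d + 20 * δ) / (10 * δ)⌉₊) := by
  classical
  obtain ⟨f, hf⟩ := hgeo x y
  set L := dist x y with hLdef
  set a : ℝ := d + 10 * δ with hadef
  set b : ℝ := L - (d + 10 * δ) with hbdef
  have haI : a ∈ Icc (0:ℝ) L := ⟨by positivity, by simp only [hadef]; linarith⟩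
  have hbI : b ∈ Icc (0:ℝ) L := ⟨by simp only [hbdef]; linarith, by simp only [hbdef]; linarith⟩
  set x' : S := f a with hx'def
  set y' : S := f b with hy'def
  have hxa : dist x x' = a := geo_dist hf haI
  have hyb : dist x y' = b := geo_dist hf hbI
  have hx'y' : dist x' y' = b - a := by
    rw [hx'def, hy'def, hf.2.2 a haI b hbI, abs_of_nonpos (by linarith : a - b ≤ 0)]; ring
  have hba : R₀ ≤ dist x' y' := by rw [hx'y']; simp only [hadef, hbdef]; linarith
  obtain ⟨hBfin, hBcard⟩ := H x' y' hba
  set B := {g : G | dist x' (g • x') ≤ 100 * δ ∧ dist y' (g • y') ≤ 100 * δ} with hBdef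
  set A := {g : G | dist x (g • x) ≤ d ∧ dist y (g • y) ≤ d} with hAdef
  -- inverse moves points by the same amount
  have hinv : ∀ (g : G) (z : S), dist z (g⁻¹ • z) = dist z (g • z) := by
    intro g z
    rw [← hiso g z (g⁻¹ • z), smul_inv_smul, dist_comm]
  -- selection of shadows
  have hsel : ∀ g ∈ A, ∃ sa sb : ℝ, sa ∈ Icc (0:ℝ) L ∧ sb ∈ Icc (0:ℝ) L ∧
      dist (g • x') (f sa) ≤ 2 * δ ∧ |sa - a| ≤ d + 2 * δ ∧
      dist (g • y') (f sb) ≤ 2 * δ ∧ |sb - b| ≤ d + 2 * δ := by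
    intro g hg
    have hgx : dist x (g⁻¹ • x) ≤ d := by rw [hinv]; exact hg.1
    have hgy : dist y (g⁻¹ • y) ≤ d := by rw [hinv]; exact hg.2
    obtain ⟨sa, hsaI, hsa1, hsa2⟩ := keyLem hiso hδ hgeo hhyp hf hgx hgy
      (t := a) (by simp only [hadef]; linarith) (by simp only [hadef]; linarith)
    obtain ⟨sb, hsbI, hsb1, hsb2⟩ := keyLem hiso hδ hgeo hhyp hf hgx hgy
      (t := b) (by simp only [hbdef]; linarith) (by simp only [hbdef]; linarith)
    refine ⟨sa, sb, hsaI, hsbI, ?_, hsa2, ?_, hsb2⟩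
    · calc dist (g • x') (f sa) = dist (g⁻¹ • g • x') (g⁻¹ • f sa) := (hiso g⁻¹ _ _).symm
      _ = dist x' (g⁻¹ • f sa) := by rw [inv_smul_smul]
      _ ≤ 2 * δ := by rw [hx'def]; exact hsa1
    · calc dist (g • y') (f sb) = dist (g⁻¹ • g • y') (g⁻¹ • f sb) := (hiso g⁻¹ _ _).symm
      _ = dist y' (g⁻¹ • f sb) := by rw [inv_smul_smul]
      _ ≤ 2 * δ := by rw [hy'def]; exact hsb1
  choose! sa sb hsaI hsbI hsax hsaa hsby hsbb using hsel
  -- the classifying quantity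
  set φ : G → ℝ := fun g => dist x (g • x') with hφdef
  have hφub : ∀ g ∈ A, φ g ≤ a + d := by
    intro g hg
    calc φ g ≤ dist x (g • x) + dist (g • x) (g • x') := dist_triangle _ _ _
    _ ≤ a + d := by rw [hiso, hxa]; linarith [hg.1]
  have hφlb : ∀ g ∈ A, a - d ≤ φ g := by
    intro g hg
    have := dist_triangle (g • x) x (g • x')
    rw [dist_comm (g • x) x] at this
    have h2 : dist (g • x) (g • x') = a := by rw [hiso]; exact hxa
    simp only [hφdef]; linarith [hg.1]
  have hφsa : ∀ g ∈ A, |sa g - φ g| ≤ 2 * δ := by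
    intro g hg
    have h1 : dist x (f (sa g)) = sa g := geo_dist hf (hsaI g hg)
    have h2 : |dist x (f (sa g)) - dist x (g • x')| ≤ dist (f (sa g)) (g • x') := by
      have h3 := abs_dist_sub_le (f (sa g)) (g • x') x
      rw [dist_comm (f (sa g)) x, dist_comm (g • x') x] at h3
      exact h3
    rw [h1, dist_comm (f (sa g)) (g • x')] at h2
    show |sa g - dist x (g • x')| ≤ 2 * δ
    exact le_trans h2 (hsax g hg)
  -- relation between sa and sb
  have hsab : ∀ g ∈ A, |sb g - sa g - (b - a)| ≤ 4 * δ := by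
    intro g hg
    have hdist : dist (f (sa g)) (f (sb g)) = |sa g - sb g| :=
      hf.2.2 _ (hsaI g hg) _ (hsbI g hg)
    have hgxy : dist (g • x') (g • y') = b - a := by rw [hiso]; exact hx'y'
    have hord : sa g ≤ sb g := by
      have h1 := abs_le.mp (hsaa g hg)
      have h2 := abs_le.mp (hsbb g hg)
      simp only [hadef, hbdef] at h1 h2
      linarith
    have habs : |sa g - sb g| = sb g - sa g := by
      rw [abs_sub_comm, abs_of_nonneg (by linarith)]
    rw [habs] at hdist
    have t1 : dist (f (sa g)) (f (sb g)) ≤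
        dist (f (sa g)) (g • x') + dist (g • x') (g • y') + dist (g • y') (f (sb g)) := by
      linarith [dist_triangle (f (sa g)) (g • x') (f (sb g)),
        dist_triangle (g • x') (g • y') (f (sb g))]
    have t2 : dist (g • x') (g • y') ≤
        dist (g • x') (f (sa g)) + dist (f (sa g)) (f (sb g)) + dist (f (sb g)) (g • y') := by
      linarith [dist_triangle (g • x') (f (sa g)) (g • y'),
        dist_triangle (f (sa g)) (f (sb g)) (g • y')]
    rw [hdist, hgxy] at t1 t2
    rw [abs_le]
    constructor
    · rw [dist_comm (f (sb g)) (g • y')] at t2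
      have e1 := hsax g hg
      have e2 := hsby g hg
      linarith
    · rw [dist_comm (f (sa g)) (g • x')] at t1
      have e1 := hsax g hg
      have e2 := hsby g hg
      linarith
  -- classification into at most n classes
  set c : ℝ := 10 * δ with hcdef
  have hc : 0 < c := by positivity
  set n : ℕ := ⌈(2 * d + 20 * δ) / (10 * δ)⌉₊ with hndef
  set idx : G → ℕ := fun g => ⌊(φ g - (a - d)) / c⌋₊ with hidxdef
  have hu0 : ∀ g ∈ A, 0 ≤ (φ g - (a - d)) / c :=
    fun g hg => div_nonneg (by linarith [hφlb g hg]) hc.le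
  have hidxlt : ∀ g ∈ A, idx g < n := by
    intro g hg
    have h0 : (φ g - (a - d)) / c < n := by
      have h1 : (φ g - (a - d)) / c ≤ 2 * d / c :=
        (div_le_div_iff_of_pos_right hc).mpr (by linarith [hφub g hg])
      have h2 : 2 * d / c < (2 * d + 20 * δ) / c :=
        (div_lt_div_iff_of_pos_right hc).mpr (by linarith)
      have h3 : (2 * d + 20 * δ) / (10 * δ) ≤ (n : ℝ) := Nat.le_ceil _
      rw [hcdef] at h1 h2
      linarith
    simp only [hidxdef]
    exact Nat.floor_lt (hu0 g hg) |>.mpr h0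
  have hclass : ∀ g ∈ A, ∀ h ∈ A, idx g = idx h → |φ g - φ h| < c := by
    intro g hg h hh he
    have b1 : (idx g : ℝ) * c ≤ φ g - (a - d) :=
      (le_div_iff₀ hc).mp (Nat.floor_le (hu0 g hg))
    have b2 : φ g - (a - d) < ((idx g : ℕ) + 1 : ℝ) * c := by
      have := Nat.lt_floor_add_one ((φ g - (a - d)) / c)
      have := (div_lt_iff₀ hc).mp this
      push_cast at this ⊢
      linarith
    have b3 : (idx h : ℝ) * c ≤ φ h - (a - d) :=
      (le_div_iff₀ hc).mp (Nat.floor_le (hu0 h hh))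
    have b4 : φ h - (a - d) < ((idx h : ℕ) + 1 : ℝ) * c := by
      have := Nat.lt_floor_add_one ((φ h - (a - d)) / c)
      have := (div_lt_iff₀ hc).mp this
      push_cast at this ⊢
      linarith
    have hee : ((idx g : ℕ) : ℝ) = ((idx h : ℕ) : ℝ) := by rw [he]
    rw [abs_lt]
    constructor <;> nlinarith [hee]
  -- same class implies small relative displacement
  have hBmem : ∀ g ∈ A, ∀ h ∈ A, idx g = idx h → g⁻¹ * h ∈ B := by
    intro g hg h hh he
    have hφ := abs_lt.mp (hclass g hg h hh he)
    have A1 := abs_le.mp (hφsa g hg)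
    have A2 := abs_le.mp (hφsa h hh)
    have hsa_close : |sa g - sa h| ≤ 14 * δ := by
      rw [abs_le]; rw [hcdef] at hφ; constructor <;> linarith
    have B1 := abs_le.mp (hsab g hg)
    have B2 := abs_le.mp (hsab h hh)
    have hsb_close : |sb g - sb h| ≤ 22 * δ := by
      have := abs_le.mp hsa_close
      rw [abs_le]; constructor <;> linarith
    have key : ∀ (w : S) (sw : G → ℝ) (M : ℝ),
        (∀ g ∈ A, dist (g • w) (f (sw g)) ≤ 2 * δ) →
        (∀ g ∈ A, sw g ∈ Icc (0:ℝ) L) →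
        |sw g - sw h| ≤ M →
        dist w ((g⁻¹ * h) • w) ≤ M + 4 * δ := by
      intro w sw M hw hwI hM
      have e : dist w ((g⁻¹ * h) • w) = dist (g • w) (h • w) := by
        rw [← hiso g w ((g⁻¹ * h) • w), mul_smul, smul_inv_smul]
      rw [e]
      have hmid : dist (f (sw g)) (f (sw h)) = |sw g - sw h| :=
        hf.2.2 _ (hwI g hg) _ (hwI h hh)
      have t1 : dist (g • w) (h • w) ≤
          dist (g • w) (f (sw g)) + dist (f (sw g)) (f (sw h)) + dist (f (sw h)) (h • w) := by
        linarith [dist_triangle (g • w) (f (sw g)) (h • w),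
          dist_triangle (f (sw g)) (f (sw h)) (h • w)]
      rw [hmid] at t1
      have e2 : dist (f (sw h)) (h • w) = dist (h • w) (f (sw h)) := dist_comm _ _
      rw [e2] at t1
      linarith [hw g hg, hw h hh]
    constructor
    · have := key x' sa (14 * δ) hsax hsaI hsa_close
      simp only [hBdef, mem_setOf_eq] at *
      linarith
    · have := key y' sb (22 * δ) hsby hsbI hsb_close
      linarith
  -- counting
  set Ai : ℕ → Set G := fun i => {g ∈ A | idx g = i} with hAidef
  have hAi : ∀ i, (Ai i).Finite ∧ (Ai i).ncard ≤ N₀ := by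
    intro i
    rcases Set.eq_empty_or_nonempty (Ai i) with he | ⟨g₀, hg₀⟩
    · rw [he]; exact ⟨Set.finite_empty, by simp⟩
    · have hg₀A : g₀ ∈ A := hg₀.1
      have hmaps : ∀ h ∈ Ai i, g₀⁻¹ * h ∈ B :=
        fun h hh => hBmem g₀ hg₀A h hh.1 (hg₀.2.trans hh.2.symm)
      have hinj : Set.InjOn (fun h => g₀⁻¹ * h) (Ai i) :=
        fun p _ q _ e => by simpa using e
      refine ⟨?_, ?_⟩
      · refine Set.Finite.of_finite_image (hBfin.subset ?_) hinj
        rintro _ ⟨h, hh, rfl⟩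
        exact hmaps h hh
      · exact le_trans (Set.ncard_le_ncard_of_injOn _ hmaps hinj hBfin) hBcard
  have hcover : A ⊆ ↑((Finset.range n).biUnion fun i => ((hAi i).1.toFinset)) := by
    intro g hg
    simp only [Finset.coe_biUnion, Finset.mem_coe, Finset.mem_range, Set.mem_iUnion,
      Set.Finite.mem_toFinset]
    exact ⟨idx g, hidxlt g hg, hg, rfl⟩
  constructor
  · exact Set.Finite.subset (Finset.finite_toSet _) hcover
  · have step1 : A.ncard ≤ ((Finset.range n).biUnion fun i => ((hAi i).1.toFinset)).card := by
      rw [← Set.ncard_coe_finset]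
      exact Set.ncard_le_ncard hcover (Finset.finite_toSet _)
    have step2 : ∀ i ∈ Finset.range n, ((hAi i).1.toFinset).card ≤ N₀ := by
      intro i _
      rw [← Set.ncard_eq_toFinset_card (Ai i) (hAi i).1]
      exact (hAi i).2
    have step3 := Finset.card_biUnion_le
      (s := Finset.range n) (t := fun i => ((hAi i).1.toFinset))
    have step4 : ∑ i ∈ Finset.range n, ((hAi i).1.toFinset).card ≤
        ∑ i ∈ Finset.range n, N₀ := Finset.sum_le_sum step2
    have step5 : ∑ i ∈ Finset.range n, N₀ = n * N₀ := by
      rw [Finset.sum_const, Finset.card_range, smul_eq_mul]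
    rw [mul_comm]
    exact le_trans step1 (le_trans step3 (le_trans step4 step5.le))

open GMet in
/-- Let `G` act by isometries on a `δ`-hyperbolic geodesic space `S` with
`δ > 0`.  Then the action is acylindrical iff there exist `R₀, N₀ > 0` such that for all
`x, y` with `d(x,y) ≥ R₀`, the set `{g : d(x,gx) ≤ 100δ ∧ d(y,gy) ≤ 100δ}` has at most `N₀`
elements.  Moreover, in the converse direction one can take `R_d = R₀ + 4d + 100δ` and
`N_d = N₀·⌈(2d+20δ)/(10δ)⌉`. -/
theorem statement6 {G : Type u} [Group G] {S : Type v} [MetricSpace S] [MulAction G S]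
    (hiso : IsIsometricAction G S) (δ : ℝ) (hδ : 0 < δ)
    (hgeo : GeodesicSpace S) (hhyp : DeltaHyp S δ) :
    (IsAcylindrical G S ↔
      ∃ (R₀ : ℝ) (N₀ : ℕ), 0 < R₀ ∧ 0 < N₀ ∧
        ∀ x y : S, R₀ ≤ dist x y →
          AtMostCard {g : G | dist x (g • x) ≤ 100 * δ ∧ dist y (g • y) ≤ 100 * δ} N₀) ∧
    (∀ (R₀ : ℝ) (N₀ : ℕ), 0 < R₀ → 0 < N₀ →
      (∀ x y : S, R₀ ≤ dist x y →
        AtMostCard {g : G | dist x (g • x) ≤ 100 * δ ∧ dist y (g • y) ≤ 100 * δ} N₀) →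
      ∀ d : ℝ, 0 < d → ∀ x y : S, R₀ + 4 * d + 100 * δ ≤ dist x y →
        AtMostCard {g : G | dist x (g • x) ≤ d ∧ dist y (g • y) ≤ d}
          (N₀ * ⌈(2 * d + 20 * δ) / (10 * δ)⌉₊)) := by
  have hmain := mainCount hiso hδ hgeo hhyp
  constructor
  · constructor
    · intro hacyl
      obtain ⟨R, N, hR, hN, h⟩ := hacyl (100 * δ) (by positivity)
      exact ⟨R, N, hR, hN, h⟩
    · rintro ⟨R₀, N₀, hR₀, hN₀, H⟩ d hd
      refine ⟨R₀ + 4 * d + 100 * δ, N₀ * ⌈(2 * d + 20 * δ) / (10 * δ)⌉₊,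
        by positivity, ?_, ?_⟩
      · exact Nat.mul_pos hN₀ (Nat.ceil_pos.mpr (by positivity))
      · intro x y hxy
        exact hmain R₀ N₀ hR₀ hN₀ H d hd x y hxy
  · intro R₀ N₀ hR₀ hN₀ H d hd x y hxy
    exact hmain R₀ N₀ hR₀ hN₀ H d hd x y hxy
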